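/- Let σ>0, let ρ_0,ρ_1 > 0 with ρ_0ρ_1 < 1, let L ≥ 1 be an integer, and let (s_0,…,s_L) ∈ ℤ^{L+1} with s_0 = 0 and |s_k − s_{k−1}| ≤ 1 for all k. Then Σ_{γ ∈ M^(L): γ_k − γ_0 = s_k for all k} ρ_0^{γ_0} ρ_1^{γ_L} σ^{h(γ)} = σ^{#{1≤k≤L: s_k = s_{k−1}}} · ρ_1^{s_L} · (ρ_0ρ_1)^{−min_{0≤k≤L} s_k} / (1 − ρ_0ρ_1). -/
import Mathlib


open MeasureTheory Real Filter Finset Topology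

noncomputable section

/-- A Motzkin path of length `L`: nonnegative integer values with steps of size at most 1. -/
def MotzkinPath (L : ℕ) : Type :=
  {γ : Fin (L + 1) → ℕ // ∀ k : Fin L, ((γ k.succ : ℤ) - (γ k.castSucc : ℤ)).natAbs ≤ 1}

/-- Number of horizontal (level) steps of a Motzkin path. -/
def levelCount {L : ℕ} (γ : MotzkinPath L) : ℕ :=
  (Finset.univ.filter fun k : Fin L => γ.1 k.succ = γ.1 k.castSucc).card

/-- Weight of a Motzkin path: geometric boundary weights and weight `σ` per level step. -/
def pathWeight {L : ℕ} (ρ₀ ρ₁ σ : ℝ) (γ : MotzkinPath L) : ℝ :=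
  ρ₀ ^ (γ.1 0) * ρ₁ ^ (γ.1 (Fin.last L)) * σ ^ levelCount γ

/-- Summing the weights of the Motzkin paths with a prescribed increment
sequence `s` (a walk started at `0` with steps in `{−1,0,1}`) gives
`σ^{#level steps} ρ₁^{s_L} (ρ₀ρ₁)^{−min s} / (1 − ρ₀ρ₁)`. -/
theorem statement15 (σ ρ₀ ρ₁ : ℝ) (hσ : 0 < σ) (hρ₀ : 0 < ρ₀) (hρ₁ : 0 < ρ₁)
    (hρρ : ρ₀ * ρ₁ < 1) (L : ℕ) (hL : 1 ≤ L)
    (s : Fin (L + 1) → ℤ) (hs0 : s 0 = 0)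
    (hstep : ∀ k : Fin L, (s k.succ - s k.castSucc).natAbs ≤ 1) :
    (∑' γ : {γ : MotzkinPath L // ∀ k : Fin (L + 1), (γ.1 k : ℤ) - (γ.1 0 : ℤ) = s k},
        pathWeight ρ₀ ρ₁ σ γ.1) =
      σ ^ ((Finset.univ.filter fun k : Fin L => s k.succ = s k.castSucc).card) *
        ρ₁ ^ (s (Fin.last L)) *
        (ρ₀ * ρ₁) ^ (-(Finset.univ.inf' Finset.univ_nonempty s)) / (1 - ρ₀ * ρ₁) := by
  set m := Finset.univ.inf' Finset.univ_nonempty s with hm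
  have hmle : ∀ k, m ≤ s k := fun k => Finset.inf'_le _ (Finset.mem_univ k)
  obtain ⟨k0, -, hk0⟩ := Finset.exists_mem_eq_inf' (Finset.univ_nonempty) s
  have hm0 : m ≤ 0 := by have := hmle 0; omega
  set M : ℕ := (-m).toNat with hM
  have hMm : (M : ℤ) = -m := Int.toNat_of_nonneg (by omega)
  have key : ∀ (n : ℕ) (k : Fin (L + 1)), (0 : ℤ) ≤ (n : ℤ) + M + s k := by
    intro n k; have := hmle k; omega
  -- the forward map
  let f : ℕ → {γ : MotzkinPath L // ∀ k : Fin (L + 1), (γ.1 k : ℤ) - (γ.1 0 : ℤ) = s k} :=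
    fun n =>
      ⟨⟨fun k => ((n : ℤ) + M + s k).toNat, by
        intro k
        have h1 := Int.toNat_of_nonneg (key n k.succ)
        have h2 := Int.toNat_of_nonneg (key n k.castSucc)
        have := hstep k
        simp only []
        omega⟩, by
        intro k
        have h1 := Int.toNat_of_nonneg (key n k)
        have h2 := Int.toNat_of_nonneg (key n 0)
        simp only []
        rw [hs0] at h2
        omega⟩
  have hf0 : ∀ n : ℕ, ((f n).1.1 0 : ℤ) = (n : ℤ) + M := by
    intro n
    have h2 := Int.toNat_of_nonneg (key n 0)
    simp only [f]
    rw [hs0] at h2 ⊢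
    omega
  have hfk : ∀ (n : ℕ) (k : Fin (L + 1)), ((f n).1.1 k : ℤ) = (n : ℤ) + M + s k := by
    intro n k
    exact Int.toNat_of_nonneg (key n k)
  -- the equivalence
  have hγ0 : ∀ γ : {γ : MotzkinPath L // ∀ k : Fin (L + 1), (γ.1 k : ℤ) - (γ.1 0 : ℤ) = s k},
      (M : ℤ) ≤ (γ.1.1 0 : ℤ) := by
    intro γ
    have h := γ.2 k0
    have : (0 : ℤ) ≤ (γ.1.1 k0 : ℤ) := Int.natCast_nonneg _
    omega
  let e : ℕ ≃ {γ : MotzkinPath L // ∀ k : Fin (L + 1), (γ.1 k : ℤ) - (γ.1 0 : ℤ) = s k} :=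
    { toFun := f
      invFun := fun γ => ((γ.1.1 0 : ℤ) - M).toNat
      left_inv := by
        intro n
        show (((f n).1.1 0 : ℤ) - M).toNat = n
        have := hf0 n
        omega
      right_inv := by
        intro γ
        apply Subtype.ext
        apply Subtype.ext
        funext k
        show ((f (((γ.1.1 0 : ℤ) - M).toNat)).1.1 k) = γ.1.1 k
        have h := γ.2 k
        have h0 := hγ0 γ
        have h1 := hfk (((γ.1.1 0 : ℤ) - M).toNat) k
        have h2 : ((((γ.1.1 0 : ℤ) - M).toNat : ℤ)) = (γ.1.1 0 : ℤ) - M :=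
          Int.toNat_of_nonneg (by omega)
        omega }
  rw [← e.tsum_eq]
  have hw : ∀ n : ℕ, pathWeight ρ₀ ρ₁ σ (e n).1 =
      (σ ^ ((Finset.univ.filter fun k : Fin L => s k.succ = s k.castSucc).card) *
        ρ₁ ^ (s (Fin.last L)) * (ρ₀ * ρ₁) ^ (-m)) * (ρ₀ * ρ₁) ^ n := by
    intro n
    show pathWeight ρ₀ ρ₁ σ (f n).1 = _
    have hcount : levelCount (f n).1 =
        (Finset.univ.filter fun k : Fin L => s k.succ = s k.castSucc).card := by
      unfold levelCount
      congr 1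
      apply Finset.filter_congr
      intro k _
      have h1 := hfk n k.succ
      have h2 := hfk n k.castSucc
      constructor <;> intro h <;> omega
    have h0 : (f n).1.1 0 = n + M := by have := hf0 n; omega
    have hlast : ((f n).1.1 (Fin.last L) : ℤ) = (n : ℤ) + M + s (Fin.last L) :=
      hfk n (Fin.last L)
    have hρ₁last : (ρ₁ : ℝ) ^ ((f n).1.1 (Fin.last L)) =
        ρ₁ ^ ((n : ℤ) + M) * ρ₁ ^ (s (Fin.last L)) := by
      rw [← zpow_natCast ρ₁ ((f n).1.1 (Fin.last L)), hlast, ← zpow_add₀ (ne_of_gt hρ₁)]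
    unfold pathWeight
    rw [hcount, h0, hρ₁last]
    have : (ρ₀ : ℝ) ^ (n + M) = ρ₀ ^ ((n : ℤ) + M) := by
      rw [← zpow_natCast]; norm_cast
    rw [this]
    have hmul : (ρ₀ : ℝ) ^ ((n : ℤ) + M) * ρ₁ ^ ((n : ℤ) + M) = (ρ₀ * ρ₁) ^ ((n : ℤ) + M) := by
      rw [mul_zpow]
    have hpos : (0 : ℝ) < ρ₀ * ρ₁ := mul_pos hρ₀ hρ₁
    have hsplit : (ρ₀ * ρ₁ : ℝ) ^ ((n : ℤ) + M) = (ρ₀ * ρ₁) ^ (-m) * (ρ₀ * ρ₁) ^ n := by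
      rw [zpow_add₀ (ne_of_gt hpos)]
      rw [show ((M : ℤ)) = -m from hMm]
      rw [zpow_natCast]
      ring
    rw [show (ρ₀ : ℝ) ^ ((n : ℤ) + M) * (ρ₁ ^ ((n : ℤ) + M) * ρ₁ ^ s (Fin.last L)) =
        (ρ₀ * ρ₁) ^ ((n : ℤ) + M) * ρ₁ ^ s (Fin.last L) from by rw [mul_zpow]; ring,
      hsplit]
    ring
  rw [tsum_congr hw, tsum_mul_left,
    tsum_geometric_of_lt_one (le_of_lt (mul_pos hρ₀ hρ₁)) hρρ]
  field_simp
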